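/- arXiv:1106.5022 — 3 statements merged into one kernel-verified Lean document; each statement's English description precedes it below -/
import Mathlib

section
/- Let σ_d : ℝ/ℤ → ℝ/ℤ, x ↦ d·x mod 1, with d ≥ 2. If I = (a,b) is an open arc of length |I| ≥ 1/d whose endpoints satisfy σ_d(a), σ_d(b) ∉ I, then the closure of I contains a fixed point of σ_d. -/
/-!
Lift σ_d on the arc to x ↦ d x - m, choosing the integer m in (d a - b, d b - a), an interval of
length (d + 1)(b - a) > 1. Then d a - m < b and d b - m > a, so σ_d(a), σ_d(b) ∉ I force
d a - m ≤ a and d b - m ≥ b, i.e. (d - 1) a ≤ m ≤ (d - 1) b; the point m / (d - 1) ∈ [a, b]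
is fixed.
-/

open Set

lemma AddCircle.coe_eq_coe_of_sub_eq_intCast {x y : ℝ} {m : ℤ} (h : x - y = m) :
    (x : AddCircle (1 : ℝ)) = y :=
  QuotientAddGroup.eq.mpr <| AddSubgroup.mem_zmultiples_iff.mpr ⟨-m, by simp; linarith⟩

lemma AddCircle.zsmul_coe_eq_coe_sub_intCast (d m : ℤ) (x : ℝ) :
    d • (x : AddCircle (1 : ℝ)) = ((d * x - m : ℝ) : AddCircle (1 : ℝ)) := by
  rw [← AddCircle.coe_zsmul, zsmul_eq_mul]
  exact AddCircle.coe_eq_coe_of_sub_eq_intCast (m := m) (by ring)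

lemma exists_intCast_mem_Ioo_of_one_lt_sub {u v : ℝ} (h : 1 < v - u) :
    ∃ m : ℤ, (m : ℝ) ∈ Ioo u v :=
  ⟨⌊u⌋ + 1, by push_cast; constructor <;> linarith [Int.lt_floor_add_one u, Int.floor_le u]⟩

lemma sub_intCast_notMem_of_zsmul_coe_notMem {d m : ℤ} {x : ℝ} {s : Set ℝ}
    (h : d • (x : AddCircle (1 : ℝ)) ∉ (fun t : ℝ => (t : AddCircle (1 : ℝ))) '' s) :
    d * x - m ∉ s := fun hs =>
  h ⟨_, hs, (AddCircle.zsmul_coe_eq_coe_sub_intCast d m x).symm⟩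

lemma exists_zsmul_coe_eq_self_of_intCast_mem_Icc {d : ℕ} (hd : 2 ≤ d) {a b : ℝ} {m : ℤ}
    (hm : (m : ℝ) ∈ Icc ((d - 1) * a) ((d - 1) * b)) :
    ∃ z ∈ (fun t : ℝ => (t : AddCircle (1 : ℝ))) '' Icc a b, (d : ℤ) • z = z := by
  have hd1 : (0 : ℝ) < d - 1 := by
    have : (2 : ℝ) ≤ d := by exact_mod_cast hd
    linarith
  refine ⟨_, ⟨m / (d - 1), ⟨?_, ?_⟩, rfl⟩, ?_⟩
  · rw [le_div_iff₀ hd1]; linarith [hm.1]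
  · rw [div_le_iff₀ hd1]; linarith [hm.2]
  · rw [AddCircle.zsmul_coe_eq_coe_sub_intCast d m]
    congr 1
    field_simp
    push_cast
    ring

theorem stmt1_general (d : ℕ) (hd : 2 ≤ d) (a b : ℝ) (hab : a < b)
    (hlen : 1 / d ≤ b - a)
    (ha : ((d : ℤ) • ((a : ℝ) : AddCircle (1:ℝ))) ∉
      (fun t : ℝ => (t : AddCircle (1:ℝ))) '' Set.Ioo a b)
    (hb : ((d : ℤ) • ((b : ℝ) : AddCircle (1:ℝ))) ∉
      (fun t : ℝ => (t : AddCircle (1:ℝ))) '' Set.Ioo a b) :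
    ∃ z ∈ (fun t : ℝ => (t : AddCircle (1:ℝ))) '' Set.Icc a b, (d : ℤ) • z = z := by
  have hdb : 1 ≤ (d : ℝ) * (b - a) := by
    rwa [div_le_iff₀ (by positivity), mul_comm] at hlen
  obtain ⟨m, hm_lo, hm_hi⟩ :
      ∃ m : ℤ, (m : ℝ) ∈ Ioo (d * a - b) (d * b - a) :=
    exists_intCast_mem_Ioo_of_one_lt_sub (by nlinarith)
  have hσa := sub_intCast_notMem_of_zsmul_coe_notMem (m := m) ha
  have hσb := sub_intCast_notMem_of_zsmul_coe_notMem (m := m) hb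
  push_cast at hσa hσb
  refine exists_zsmul_coe_eq_self_of_intCast_mem_Icc hd (m := m) ⟨?_, ?_⟩
  · by_contra h
    exact hσa ⟨by linarith, by linarith⟩
  · by_contra h
    exact hσb ⟨by linarith, by linarith⟩

/-- If an open arc I = (a,b) of length ≥ 1/d satisfies σ_d(a), σ_d(b) ∉ I,
then the closure of I contains a fixed point of σ_d. -/
theorem stmt1 (d : ℕ) (hd : 2 ≤ d) (a b : ℝ) (hab : a < b) (hb1 : b - a < 1)
    (hlen : 1 / d ≤ b - a)
    (ha : ((d : ℤ) • ((a : ℝ) : AddCircle (1:ℝ))) ∉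
      (fun t : ℝ => (t : AddCircle (1:ℝ))) '' Set.Ioo a b)
    (hb : ((d : ℤ) • ((b : ℝ) : AddCircle (1:ℝ))) ∉
      (fun t : ℝ => (t : AddCircle (1:ℝ))) '' Set.Ioo a b) :
    ∃ z ∈ (fun t : ℝ => (t : AddCircle (1:ℝ))) '' Set.Icc a b, (d : ℤ) • z = z :=
  stmt1_general d hd a b hab hlen ha hb
end

section
/- With notation as above (c = {y, y+1/3} a critical chord, L(c) the complementary open arc of length 2/3, Π(c) the set of points whose forward σ₃-orbit stays in the closure of L(c)): every point x ∈ Π(c) with x ≠ σ₃(y) has exactly two σ₃-preimages in Π(c), and if σ₃(y) ∈ Π(c) then σ₃(y) has exactly three σ₃-preimages in Π(c). -/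
/-!
A preimage of a point of `Π(c)` lies in `Π(c)` exactly when it lies in `closure (L(c))`.
The three `σ₃`-preimages of any point can be written `s, s + 1/3, s + 2/3` with
`s ∈ [y + 1/3, y + 2/3)`; the first two always lie in `[y + 1/3, y + 1]`, and `s + 2/3` does
exactly when `s = y + 1/3`, that is, when the point is `σ₃(y) = σ₃(y + 1/3)`.
-/

open Set

section SurvivorSet

variable {α : Type*}

def survivorSet (f : α → α) (K : Set α) : Set α := {x | ∀ n : ℕ, f^[n] x ∈ K}

variable {f : α → α} {K : Set α} {x : α}

theorem mem_survivorSet_iff : x ∈ survivorSet f K ↔ x ∈ K ∧ f x ∈ survivorSet f K := by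
  refine ⟨fun h => ⟨h 0, fun n => h (n + 1)⟩, fun ⟨h₀, h₁⟩ n => ?_⟩
  cases n with
  | zero => exact h₀
  | succ n => exact h₁ n

theorem setOf_mem_survivorSet_and_eq (hx : x ∈ survivorSet f K) :
    {z | z ∈ survivorSet f K ∧ f z = x} = {z | z ∈ K ∧ f z = x} := by
  ext z
  refine ⟨fun ⟨hz, hzx⟩ => ⟨(mem_survivorSet_iff.1 hz).1, hzx⟩,
    fun ⟨hz, hzx⟩ => ⟨mem_survivorSet_iff.2 ⟨hz, hzx ▸ hx⟩, hzx⟩⟩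

end SurvivorSet

namespace AddCircle

variable {p : ℝ} [Fact (0 < p)]

theorem coe_add_ne_coe_self (s : ℝ) {d : ℝ} (hd : d ∈ Ioo 0 p) :
    ((s + d : ℝ) : AddCircle p) ≠ s := by
  rw [coe_add, Ne, add_eq_left, coe_eq_zero_iff_of_mem_Ico ⟨hd.1.le, hd.2⟩]
  exact hd.1.ne'

theorem coe_mem_image_coe_Icc_iff {a b u : ℝ} (hb : b < a + p) (hu : u ∈ Ico a (a + p)) :
    (u : AddCircle p) ∈ ((↑) : ℝ → AddCircle p) '' Icc a b ↔ u ≤ b := by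
  refine ⟨fun ⟨v, hv, hvu⟩ => ?_, fun hub => ⟨u, ⟨hu.1, hub⟩, rfl⟩⟩
  rw [coe_eq_coe_iff_of_mem_Ico ⟨hv.1, hv.2.trans_lt hb⟩ hu] at hvu
  exact hvu ▸ hv.2

theorem exists_mem_Ico_nsmul_coe_eq {n : ℕ} (hn : 0 < n) (a : ℝ) (x : AddCircle p) :
    ∃ s ∈ Ico a (a + p / n), n • (s : AddCircle p) = x := by
  have hn' : (0 : ℝ) < n := Nat.cast_pos.2 hn
  obtain ⟨⟨t, ht₁, ht₂⟩, hx⟩ : ∃ t : Ico (n * a) (n * a + p), (t : AddCircle p) = x :=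
    ⟨equivIco p (n * a) x, coe_equivIco⟩
  refine ⟨t / n, ⟨?_, ?_⟩, ?_⟩
  · rw [le_div_iff₀ hn']; linarith
  · rw [div_lt_iff₀ hn', add_mul, div_mul_cancel₀ _ hn'.ne']; linarith
  · rw [← coe_nsmul, nsmul_eq_mul, mul_div_cancel₀ _ hn'.ne', ← hx]

theorem nsmul_eq_nsmul_coe_iff {n : ℕ} (hn : 0 < n) (s : ℝ) (z : AddCircle p) :
    n • z = n • (s : AddCircle p) ↔ ∃ k < n, z = ((s + k * p / n : ℝ) : AddCircle p) := by
  have hn' : (0 : ℝ) < n := Nat.cast_pos.2 hn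
  have hp : 0 < p := Fact.out
  obtain ⟨⟨v, hv₁, hv₂⟩, rfl⟩ : ∃ v : Ico s (s + p), (v : AddCircle p) = z :=
    ⟨equivIco p s z, coe_equivIco⟩
  rw [← coe_nsmul, ← coe_nsmul, ← sub_eq_zero, ← coe_sub, coe_eq_zero_iff]
  simp only [zsmul_eq_mul, nsmul_eq_mul]
  constructor
  · rintro ⟨m, hm⟩
    have hm₀ : (0 : ℝ) ≤ m := by
      by_contra h
      nlinarith
    have hm₁ : (m : ℝ) < n := by nlinarith
    lift m to ℕ using (by exact_mod_cast hm₀)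
    refine ⟨m, by exact_mod_cast hm₁, congrArg _ ?_⟩
    field_simp
    push_cast at hm
    linarith
  · rintro ⟨k, hk, hv⟩
    have hk₀ : 0 ≤ (k : ℝ) * p / n := by positivity
    have hk₁ : (k : ℝ) * p / n < p := by
      have : (k : ℝ) < n := by exact_mod_cast hk
      rw [div_lt_iff₀ hn']; nlinarith
    rw [coe_eq_coe_iff_of_mem_Ico ⟨hv₁, hv₂⟩ ⟨by linarith, by linarith⟩] at hv
    refine ⟨k, ?_⟩
    rw [hv]
    field_simp
    push_cast
    ring

end AddCircle

open AddCircle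

local notation "𝕋" => AddCircle (1 : ℝ)

theorem zsmul_three_eq_zsmul_three_coe_iff (s : ℝ) (z : 𝕋) :
    (3 : ℤ) • z = (3 : ℤ) • (s : 𝕋) ↔
      z = s ∨ z = ((s + 1 / 3 : ℝ) : 𝕋) ∨ z = ((s + 2 / 3 : ℝ) : 𝕋) := by
  rw [ofNat_zsmul, ofNat_zsmul, nsmul_eq_nsmul_coe_iff three_pos]
  constructor
  · rintro ⟨k, hk, rfl⟩
    interval_cases k <;> norm_num
  · rintro (rfl | rfl | rfl)
    exacts [⟨0, by norm_num⟩, ⟨1, by norm_num⟩, ⟨2, by norm_num⟩]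

/-- The closure of the major arc `L(c)` cut off by the critical chord `c = {y, y + 1/3}`. -/
def closedMajorArc (y : ℝ) : Set 𝕋 := (↑) '' Icc (y + 1 / 3) (y + 1)

theorem mem_closedMajorArc_and_zsmul_three_eq_iff {y s : ℝ}
    (hs : s ∈ Ico (y + 1 / 3) (y + 2 / 3)) (z : 𝕋) :
    z ∈ closedMajorArc y ∧ (3 : ℤ) • z = (3 : ℤ) • (s : 𝕋) ↔
      z = s ∨ z = ((s + 1 / 3 : ℝ) : 𝕋) ∨
        s = y + 1 / 3 ∧ z = ((s + 2 / 3 : ℝ) : 𝕋) := by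
  obtain ⟨hs₁, hs₂⟩ := hs
  have h₀ : (s : 𝕋) ∈ closedMajorArc y := ⟨s, ⟨hs₁, by linarith⟩, rfl⟩
  have h₁ : ((s + 1 / 3 : ℝ) : 𝕋) ∈ closedMajorArc y :=
    ⟨s + 1 / 3, ⟨by linarith, by linarith⟩, rfl⟩
  have h₂ : ((s + 2 / 3 : ℝ) : 𝕋) ∈ closedMajorArc y ↔ s = y + 1 / 3 := by
    rw [closedMajorArc, coe_mem_image_coe_Icc_iff (by linarith) ⟨by linarith, by linarith⟩]
    constructor <;> intro h <;> linarith
  rw [zsmul_three_eq_zsmul_three_coe_iff]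
  constructor
  · rintro ⟨hz, rfl | rfl | rfl⟩
    exacts [Or.inl rfl, Or.inr (Or.inl rfl), Or.inr (Or.inr ⟨h₂.1 hz, rfl⟩)]
  · rintro (rfl | rfl | ⟨hs, rfl⟩)
    exacts [⟨h₀, Or.inl rfl⟩, ⟨h₁, Or.inr (Or.inl rfl)⟩,
      ⟨h₂.2 hs, Or.inr (Or.inr rfl)⟩]

theorem ncard_closedMajorArc_preimage_eq_two {y s : ℝ} (hs : s ∈ Ioo (y + 1 / 3) (y + 2 / 3)) :
    {z | z ∈ closedMajorArc y ∧ (3 : ℤ) • z = (3 : ℤ) • (s : 𝕋)}.ncard = 2 := by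
  have : {z | z ∈ closedMajorArc y ∧ (3 : ℤ) • z = (3 : ℤ) • (s : 𝕋)} =
      {(s : 𝕋), ((s + 1 / 3 : ℝ) : 𝕋)} := by
    ext z
    simp only [mem_ofPred_eq, mem_closedMajorArc_and_zsmul_three_eq_iff (Ioo_subset_Ico_self hs),
      hs.1.ne', false_and, or_false, mem_insert_iff, mem_singleton_iff]
  rw [this, ncard_pair (coe_add_ne_coe_self s (by norm_num)).symm]

theorem ncard_closedMajorArc_preimage_eq_three (y : ℝ) :
    {z | z ∈ closedMajorArc y ∧
      (3 : ℤ) • z = (3 : ℤ) • ((y + 1 / 3 : ℝ) : 𝕋)}.ncard = 3 := by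
  have h₁₂ : ((y + 1 / 3 + 1 / 3 : ℝ) : 𝕋) ≠ ((y + 1 / 3 + 2 / 3 : ℝ) : 𝕋) := by
    rw [show y + 1 / 3 + 2 / 3 = y + 1 / 3 + 1 / 3 + 1 / 3 by ring]
    exact (coe_add_ne_coe_self _ (by norm_num)).symm
  refine ncard_eq_three.2 ⟨_, _, _, (coe_add_ne_coe_self _ (by norm_num)).symm,
    (coe_add_ne_coe_self _ (by norm_num)).symm, h₁₂, ?_⟩
  ext z
  simp only [mem_ofPred_eq, mem_insert_iff, mem_singleton_iff, true_and,
    mem_closedMajorArc_and_zsmul_three_eq_iff (y := y) ⟨le_rfl, by linarith⟩]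

/-- Preimage counts in Π(c): every x ∈ Π(c) with x ≠ σ₃(y) has exactly two σ₃-preimages
in Π(c); if σ₃(y) ∈ Π(c) then σ₃(y) has exactly three σ₃-preimages in Π(c). -/
theorem stmt9 (y : ℝ) :
    let σ : AddCircle (1:ℝ) → AddCircle (1:ℝ) := fun x => (3:ℤ) • x
    let K : Set (AddCircle (1:ℝ)) :=
      (fun t : ℝ => (t : AddCircle (1:ℝ))) '' Set.Icc (y + 1/3) (y + 1)
    let P : Set (AddCircle (1:ℝ)) := {x | ∀ n : ℕ, σ^[n] x ∈ K}
    (∀ x ∈ P, x ≠ σ ((y : ℝ) : AddCircle (1:ℝ)) →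
      Set.ncard {z | z ∈ P ∧ σ z = x} = 2) ∧
    (σ ((y : ℝ) : AddCircle (1:ℝ)) ∈ P →
      Set.ncard {z | z ∈ P ∧ σ z = σ ((y : ℝ) : AddCircle (1:ℝ))} = 3) := by
  intro σ K P
  have hσy : σ y = (3 : ℤ) • ((y + 1 / 3 : ℝ) : 𝕋) := by
    have h : (3 : ℤ) • ((1 / 3 : ℝ) : 𝕋) = 0 := by
      rw [← coe_zsmul, show (3 : ℤ) • (1 / 3 : ℝ) = 1 by norm_num, coe_period]
    rw [coe_add, smul_add, h, add_zero]
  refine ⟨fun x hx hne => ?_, fun hx => ?_⟩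
  · obtain ⟨s, ⟨hs₁, hs₂⟩, rfl⟩ := exists_mem_Ico_nsmul_coe_eq three_pos (y + 1 / 3) x
    rw [← ofNat_zsmul] at hx hne ⊢
    have hs : s ∈ Ioo (y + 1 / 3) (y + 2 / 3) := by
      refine ⟨hs₁.lt_of_ne ?_, by linarith⟩
      rintro rfl
      exact hne hσy.symm
    rw [show {z | z ∈ P ∧ σ z = _} = _ from setOf_mem_survivorSet_and_eq hx]
    exact ncard_closedMajorArc_preimage_eq_two hs
  · rw [show {z | z ∈ P ∧ σ z = _} = _ from setOf_mem_survivorSet_and_eq hx, hσy]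
    exact ncard_closedMajorArc_preimage_eq_three y
end

section
/- For the angle-tripling map σ₃ on ℝ/ℤ, the set Λ of points whose entire forward orbit is contained in the closed upper half circle [0, 1/2] is a closed, forward-invariant set on which σ₃ is two-to-one, and Λ contains no isolated points (it is a Cantor set). -/
namespace Stmt14Aux

open Set AddCircle

instance : Fact ((0:ℝ) < 1) := ⟨one_pos⟩

abbrev C := AddCircle (1:ℝ)

noncomputable def σ₀ : C → C := fun x => (3:ℤ) • x
def K₀ : Set C := (fun t : ℝ => (t : C)) '' Set.Icc 0 (1/2)
def Λ₀ : Set C := {x | ∀ n : ℕ, σ₀^[n] x ∈ K₀}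

lemma coe_inj {a b : ℝ} (ha : a ∈ Ico (0:ℝ) 1) (hb : b ∈ Ico (0:ℝ) 1)
    (h : (a : C) = (b : C)) : a = b :=
  (AddCircle.coe_eq_coe_iff_of_mem_Ico (p := (1:ℝ)) (a := (0:ℝ))
    (by simpa using ha) (by simpa using hb)).mp h

lemma sigma_coe (t : ℝ) : σ₀ (t : C) = ((3 * t : ℝ) : C) := by
  show (3:ℤ) • (t : C) = _
  rw [← AddCircle.coe_zsmul]
  norm_num

lemma cont_sigma : Continuous σ₀ := continuous_zsmul 3

lemma K_closed : IsClosed K₀ :=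
  (isCompact_Icc.image (AddCircle.continuous_mk' 1)).isClosed

lemma lam_closed : IsClosed Λ₀ := by
  have h : Λ₀ = ⋂ n : ℕ, σ₀^[n] ⁻¹' K₀ := by
    ext x; simp [Λ₀, Set.mem_iInter, Set.mem_preimage]
  rw [h]
  exact isClosed_iInter fun n => K_closed.preimage (cont_sigma.iterate n)

lemma lam_mapsTo : Set.MapsTo σ₀ Λ₀ Λ₀ := by
  intro x hx n
  have := hx (n + 1)
  rwa [Function.iterate_succ_apply] at this

lemma step_mem {s : ℝ} (h0 : 0 ≤ s) (h1 : s ≤ 1/2) (h : ((3 * s : ℝ) : C) ∈ Λ₀) :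
    ((s : ℝ) : C) ∈ Λ₀ := by
  intro n
  cases n with
  | zero => exact ⟨s, ⟨h0, h1⟩, rfl⟩
  | succ n =>
      rw [Function.iterate_succ_apply, sigma_coe]
      exact h n

lemma pre_cases {t s : ℝ} (ht0 : 0 ≤ t) (ht1 : t ≤ 1/2) (hs0 : 0 ≤ s) (hs1 : s ≤ 1/2)
    (h : ((3 * t : ℝ) : C) = (s : C)) : 3 * t = s ∨ 3 * t = s + 1 := by
  have h' : ((3 * t - s : ℝ) : C) = 0 := by
    rw [AddCircle.coe_sub, h, sub_self]
  obtain ⟨k, hk⟩ := (AddCircle.coe_eq_zero_iff (1:ℝ)).mp h'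
  have hk' : (k : ℝ) = 3 * t - s := by simpa using hk
  have hlb' : (-1 : ℤ) < k := by exact_mod_cast show (-1:ℝ) < k by rw [hk']; linarith
  have hub' : k < 2 := by exact_mod_cast show (k:ℝ) < 2 by rw [hk']; linarith
  interval_cases k
  · left; push_cast at hk'; linarith
  · right; push_cast at hk'; linarith

lemma half_mem : (((1:ℝ)/2 : ℝ) : C) ∈ Λ₀ := by
  have hfix : σ₀ (((1:ℝ)/2 : ℝ) : C) = (((1:ℝ)/2 : ℝ) : C) := by
    rw [sigma_coe]
    have : (3 : ℝ) * (1/2) = 1/2 + 1 := by norm_num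
    rw [this, AddCircle.coe_add_period]
  intro n
  rw [Function.iterate_fixed hfix]
  exact ⟨1/2, ⟨by norm_num, le_refl _⟩, rfl⟩

lemma zero_mem : (((0:ℝ) : ℝ) : C) ∈ Λ₀ := by
  have hfix : σ₀ (((0:ℝ) : ℝ) : C) = (((0:ℝ) : ℝ) : C) := by
    rw [sigma_coe]; norm_num
  intro n
  rw [Function.iterate_fixed hfix]
  exact ⟨0, ⟨le_refl _, by norm_num⟩, rfl⟩

lemma digits : ∀ n : ℕ, ∀ x ∈ Λ₀, ∃ c : ℝ, 0 ≤ c ∧ c ≤ (1 - ((1:ℝ)/3)^n)/2 ∧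
    (∀ u : ℝ, 0 ≤ u → u ≤ 1/2 → ((u : ℝ) : C) ∈ Λ₀ →
      ((c + u * ((1:ℝ)/3)^n : ℝ) : C) ∈ Λ₀) ∧
    ∃ t : ℝ, 0 ≤ t ∧ t ≤ 1/2 ∧ ((c + t * ((1:ℝ)/3)^n : ℝ) : C) = x := by
  intro n
  induction n with
  | zero =>
      intro x hx
      obtain ⟨t₀, ⟨ht0, ht1⟩, htx⟩ := hx 0
      refine ⟨0, le_refl _, by norm_num, ?_, t₀, ht0, ht1, by simpa using htx⟩
      intro u hu0 hu1 huΛ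
      simpa using huΛ
  | succ n ih =>
      intro x hx
      obtain ⟨c', hc0, hc1, hmem, t', ht0, ht1, htx⟩ := ih (σ₀ x) (lam_mapsTo hx)
      obtain ⟨t₀, ⟨h00, h01⟩, h0x⟩ := hx 0
      simp only [Function.iterate_zero_apply] at h0x
      set q : ℝ := ((1:ℝ)/3)^n with hq_def
      have hq : 0 < q := by positivity
      have hq3 : ((1:ℝ)/3)^(n+1) = q/3 := by rw [pow_succ]; ring
      have hs0 : 0 ≤ c' + t' * q := by positivity
      have hs1 : c' + t' * q ≤ 1/2 := by nlinarith
      have hσ : ((3 * t₀ : ℝ) : C) = ((c' + t' * q : ℝ) : C) := by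
        rw [← sigma_coe, h0x, htx]
      obtain ⟨a, ha01, ha⟩ : ∃ a : ℝ, (a = 0 ∨ a = 1) ∧ 3 * t₀ = a + (c' + t' * q) := by
        rcases pre_cases h00 h01 hs0 hs1 hσ with h | h
        · exact ⟨0, Or.inl rfl, by linarith⟩
        · exact ⟨1, Or.inr rfl, by linarith⟩
      have ha0 : (0:ℝ) ≤ a := by rcases ha01 with h | h <;> rw [h] <;> norm_num
      have ha1 : a ≤ 1 := by rcases ha01 with h | h <;> rw [h] <;> norm_num
      refine ⟨(a + c')/3, by positivity, ?_, ?_, t', ht0, ht1, ?_⟩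
      · rw [hq3]; linarith
      · intro u hu0 hu1 huΛ
        have hw := hmem u hu0 hu1 huΛ
        have hw0 : 0 ≤ c' + u * q := by positivity
        have hw1 : c' + u * q ≤ 1/2 := by nlinarith
        have key : ((a + c')/3 + u * ((1:ℝ)/3)^(n+1) : ℝ) = (a + (c' + u * q))/3 := by
          rw [hq3]; ring
        rw [key]
        apply step_mem (by positivity) (by linarith)
        have h3 : (3 : ℝ) * ((a + (c' + u * q))/3) = a + (c' + u * q) := by ring
        rw [h3]
        have : ((a + (c' + u * q) : ℝ) : C) = ((c' + u * q : ℝ) : C) := by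
          rcases ha01 with h | h
          · rw [h]; norm_num
          · rw [h, add_comm (1:ℝ) (c' + u * q), AddCircle.coe_add_period]
        rw [this]
        exact hw
      · have key : ((a + c')/3 + t' * ((1:ℝ)/3)^(n+1) : ℝ) = t₀ := by
          rw [hq3]; linarith
        rw [key, h0x]

lemma lam_two_to_one : ∀ y ∈ Λ₀, Set.ncard {x ∈ Λ₀ | σ₀ x = y} = 2 := by
  intro y hy
  obtain ⟨s, ⟨hs0, hs1⟩, hsy⟩ := hy 0
  simp only [Function.iterate_zero_apply] at hsy
  set a : C := ((s/3 : ℝ) : C) with ha_def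
  set b : C := (((s+1)/3 : ℝ) : C) with hb_def
  have haΛ : a ∈ Λ₀ := by
    apply step_mem (by linarith) (by linarith)
    have : (3:ℝ) * (s/3) = s := by ring
    rw [this, hsy]; exact hy
  have hbΛ : b ∈ Λ₀ := by
    apply step_mem (by linarith) (by linarith)
    have : (3:ℝ) * ((s+1)/3) = s + 1 := by ring
    rw [this, AddCircle.coe_add_period, hsy]; exact hy
  have haσ : σ₀ a = y := by
    rw [ha_def, sigma_coe]
    have : (3:ℝ) * (s/3) = s := by ring
    rw [this, hsy]
  have hbσ : σ₀ b = y := by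
    rw [hb_def, sigma_coe]
    have : (3:ℝ) * ((s+1)/3) = s + 1 := by ring
    rw [this, AddCircle.coe_add_period, hsy]
  have hne : a ≠ b := by
    intro h
    have := coe_inj (a := s/3) (b := (s+1)/3)
      ⟨by linarith, by linarith⟩ ⟨by linarith, by linarith⟩ h
    linarith
  have hset : {x ∈ Λ₀ | σ₀ x = y} = {a, b} := by
    ext x
    constructor
    · rintro ⟨hxΛ, hxσ⟩
      obtain ⟨t, ⟨ht0, ht1⟩, htx⟩ := hxΛ 0
      simp only [Function.iterate_zero_apply] at htx
      have hσ : ((3 * t : ℝ) : C) = (s : C) := by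
        rw [← sigma_coe, htx, hxσ, hsy]
      rcases pre_cases ht0 ht1 hs0 hs1 hσ with h | h
      · left; rw [← htx, ha_def]
        congr 1; linarith
      · right; rw [← htx, hb_def]
        congr 1; linarith
    · rintro (rfl | rfl)
      · exact ⟨haΛ, haσ⟩
      · exact ⟨hbΛ, hbσ⟩
  rw [hset]
  exact Set.ncard_pair hne

lemma lam_acc : ∀ x ∈ Λ₀, AccPt x (Filter.principal Λ₀) := by
  intro x hx
  rw [accPt_iff_nhds]
  intro U hU
  have hcont : Continuous (fun t : ℝ => (t : C)) := AddCircle.continuous_mk' 1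
  obtain ⟨t₀, ⟨h00, h01⟩, h0x⟩ := hx 0
  simp only [Function.iterate_zero_apply] at h0x
  have hV : (fun t : ℝ => (t : C)) ⁻¹' U ∈ nhds t₀ := by
    apply hcont.continuousAt.preimage_mem_nhds
    rw [h0x]; exact hU
  obtain ⟨ε, hε, hball⟩ := Metric.mem_nhds_iff.mp hV
  obtain ⟨n, hn⟩ := exists_pow_lt_of_lt_one hε (by norm_num : (1:ℝ)/3 < 1)
  obtain ⟨c, hc0, hc1, hmem, t, ht0, ht1, htx⟩ := digits n x hx
  set q : ℝ := ((1:ℝ)/3)^n with hq_def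
  have hq : 0 < q := by positivity
  -- the lift c + t*q equals t₀
  have hb0 : 0 ≤ c + t * q := by positivity
  have hb1 : c + t * q ≤ 1/2 := by nlinarith
  have hlift : c + t * q = t₀ :=
    coe_inj ⟨hb0, by linarith⟩ ⟨h00, by linarith⟩ (htx.trans h0x.symm)
  -- two candidates
  have hcand : ∀ u : ℝ, 0 ≤ u → u ≤ 1/2 → ((u:ℝ):C) ∈ Λ₀ →
      ((c + u * q : ℝ) : C) ∈ U ∩ Λ₀ := by
    intro u hu0 hu1 huΛ
    refine ⟨?_, hmem u hu0 hu1 huΛ⟩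
    apply hball
    rw [Metric.mem_ball, Real.dist_eq, ← hlift]
    have : |c + u * q - (c + t * q)| = |u - t| * q := by
      rw [show c + u * q - (c + t * q) = (u - t) * q by ring, abs_mul, abs_of_pos hq]
    rw [this]
    have habs : |u - t| ≤ 1/2 := by
      rw [abs_le]; constructor <;> linarith
    nlinarith
  have h0' := hcand 0 le_rfl (by norm_num) zero_mem
  have h1' := hcand (1/2) (by norm_num) le_rfl half_mem
  have hne : ((c + 0 * q : ℝ) : C) ≠ ((c + (1/2) * q : ℝ) : C) := by
    intro h
    have := coe_inj (a := c + 0 * q) (b := c + (1/2) * q)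
      ⟨by positivity, by nlinarith⟩ ⟨by positivity, by nlinarith⟩ h
    nlinarith
  by_cases hx0 : ((c + 0 * q : ℝ) : C) = x
  · exact ⟨((c + (1/2) * q : ℝ) : C), h1', fun h => hne (by rw [hx0, h])⟩
  · exact ⟨((c + 0 * q : ℝ) : C), h0', hx0⟩

end Stmt14Aux



/-- The set Λ of points whose entire forward σ₃-orbit stays in the closed upper half
circle [0,1/2] is closed, forward invariant, σ₃ is exactly two-to-one on Λ, and Λ has
no isolated points. -/
theorem stmt14 :
    let σ : AddCircle (1:ℝ) → AddCircle (1:ℝ) := fun x => (3:ℤ) • x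
    let K : Set (AddCircle (1:ℝ)) :=
      (fun t : ℝ => (t : AddCircle (1:ℝ))) '' Set.Icc 0 (1/2)
    let Λ : Set (AddCircle (1:ℝ)) := {x | ∀ n : ℕ, σ^[n] x ∈ K}
    IsClosed Λ ∧ Set.MapsTo σ Λ Λ ∧
      (∀ y ∈ Λ, Set.ncard {x ∈ Λ | σ x = y} = 2) ∧
      (∀ x ∈ Λ, AccPt x (Filter.principal Λ)) := by
  intro σ K Λ
  exact ⟨Stmt14Aux.lam_closed, Stmt14Aux.lam_mapsTo, Stmt14Aux.lam_two_to_one,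
    Stmt14Aux.lam_acc⟩
end
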